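/- Let p be a prime with p > 3 and let H be a subgroup of GL₂(ℤ/p²ℤ). If φ(H) contains every element of GL₂(ℤ/pℤ) of determinant 1, then H contains every element g ∈ GL₂(ℤ/p²ℤ) satisfying φ(g) = 1 and det(g) = 1; that is, ker φ ∩ SL₂(ℤ/p²ℤ) ⊆ H. -/

import Mathlib

/-!
Lift `!![1, 1; 0, 1]` to some `h ∈ H` and write `h = 1 + M`; then `M ^ 2 ∈ p • M₂(ℤ/p²ℤ)`, so the
binomial theorem and `p ∣ choose p 2, choose p 3` (this is where `3 < p` enters) give
`h ^ p = 1 + p • !![0, 1; 0, 0]`. Because `ker φ = {1 + p • A}` is abelian, conjugating an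
element of `H ∩ ker φ` by any `g` with `φ g ∈ φ H` stays in `H`; hence the module
`{A | 1 + p • A ∈ H}` is stable under conjugation by `SL₂(ℤ/p²ℤ)`. The conjugates of
`!![0, 1; 0, 0]` span the trace-zero matrices, and `det (1 + p • A) = 1 + p * trace A`.
-/

open Matrix

/-- `GL₂(ℤ/nℤ)`. -/
abbrev GL2 (n : ℕ) : Type := GL (Fin 2) (ZMod n)

/-- Reduction modulo `p` from `ℤ/p²ℤ` to `ℤ/pℤ`. -/
def red (p : ℕ) : ZMod (p^2) →+* ZMod p :=
  ZMod.castHom (dvd_pow_self p (by norm_num)) (ZMod p)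

/-- The natural homomorphism `φ : GL₂(ℤ/p²ℤ) →* GL₂(ℤ/pℤ)` given by entrywise
reduction modulo `p`. -/
def phi (p : ℕ) : GL2 (p^2) →* GL2 p :=
  Matrix.GeneralLinearGroup.map (red p)

/-- The element `1 + p • A` of `GL₂(ℤ/p²ℤ)` (its inverse is `1 - p • A`). -/
def kerUnit {p : ℕ} (A : Matrix (Fin 2) (Fin 2) (ZMod (p^2))) : GL2 (p^2) where
  val := 1 + (p : ZMod (p^2)) • A
  inv := 1 - (p : ZMod (p^2)) • A
  val_inv := by
    have h : ((p : ZMod (p^2)) • A) * ((p : ZMod (p^2)) • A) = 0 := by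
      rw [smul_mul_assoc, mul_smul_comm, smul_smul, ← Nat.cast_mul, ← pow_two,
        ZMod.natCast_self, zero_smul]
    rw [add_mul, one_mul, mul_sub, mul_one, h, sub_zero]
    abel
  inv_val := by
    have h : ((p : ZMod (p^2)) • A) * ((p : ZMod (p^2)) • A) = 0 := by
      rw [smul_mul_assoc, mul_smul_comm, smul_smul, ← Nat.cast_mul, ← pow_two,
        ZMod.natCast_self, zero_smul]
    rw [sub_mul, one_mul, mul_add, mul_one, h, add_zero]
    abel

/-- The antidiagonal swap matrix `!![0,1;1,0]` as an element of `GL₂(ℤ/p²ℤ)`. -/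
def swapGL (p : ℕ) : GL2 (p^2) where
  val := !![0, 1; 1, 0]
  inv := !![0, 1; 1, 0]
  val_inv := by
    ext i j
    fin_cases i <;> fin_cases j <;>
      simp [Matrix.mul_apply, Fin.sum_univ_succ, Matrix.one_apply]
  inv_val := by
    ext i j
    fin_cases i <;> fin_cases j <;>
      simp [Matrix.mul_apply, Fin.sum_univ_succ, Matrix.one_apply]

/-- Subgroups `H₁` and `H₂` of a group `G` are locally conjugate in `G` if there is a
bijection `f : H₁ → H₂` such that `h` and `f h` are conjugate in `G` for every `h ∈ H₁`. -/
def IsLocallyConjugate {G : Type*} [Group G] (H₁ H₂ : Subgroup G) : Prop :=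
  ∃ f : H₁ ≃ H₂, ∀ h : H₁, IsConj (h : G) ((f h : G))

/-- Subgroups `H₁` and `H₂` of `G` are conjugate in `G`: `g H₁ g⁻¹ = H₂` for some `g`. -/
def IsConjugateSubgroup {G : Type*} [Group G] (H₁ H₂ : Subgroup G) : Prop :=
  ∃ g : G, Subgroup.map (MulAut.conj g).toMonoidHom H₁ = H₂

/-- Nontrivially locally conjugate: locally conjugate but not conjugate. -/
def IsNontriviallyLocallyConjugate {G : Type*} [Group G] (H₁ H₂ : Subgroup G) : Prop :=
  IsLocallyConjugate H₁ H₂ ∧ ¬ IsConjugateSubgroup H₁ H₂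
theorem Subgroup.conj_mem_of_mem_ker {G Q : Type*} [Group G] [Group Q] {f : G →* Q}
    [IsMulCommutative f.ker] {H : Subgroup G} {x g : G} (hxH : x ∈ H) (hxK : x ∈ f.ker)
    (hg : f g ∈ H.map f) : g * x * g⁻¹ ∈ H := by
  obtain ⟨h, hhH, hfh⟩ := hg
  have hk : g * h⁻¹ ∈ f.ker := by simp [MonoidHom.mem_ker, hfh]
  have hy : h * x * h⁻¹ ∈ f.ker := f.normal_ker.conj_mem x hxK h
  have hconj : g * x * g⁻¹ = h * x * h⁻¹ :=
    calc g * x * g⁻¹ = (g * h⁻¹) * (h * x * h⁻¹) * (g * h⁻¹)⁻¹ := by group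
      _ = h * x * h⁻¹ := by rw [setLike_mul_comm hk hy]; group
  rw [hconj]
  exact H.mul_mem (H.mul_mem hhH hxH) (H.inv_mem hhH)

section

variable {A : Type*} [Ring A] {p : ℕ}

theorem one_add_pow_prime_of_sq_eq (hp : p.Prime) (hp3 : 3 < p) (hpp : (p : A) ^ 2 = 0)
    {M Y : A} (hM : M ^ 2 = p • Y) : (1 + M) ^ p = 1 + p • M := by
  rw [nsmul_eq_mul] at hM ⊢
  have hpM : ∀ m, 2 ≤ m → (p : A) * M ^ m = 0 := by
    intro m hm
    obtain ⟨k, rfl⟩ := Nat.exists_eq_add_of_le hm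
    rw [pow_add, hM, ← mul_assoc, ← mul_assoc, ← sq, hpp, zero_mul, zero_mul]
  have hMp : M ^ p = 0 := by
    obtain ⟨k, rfl⟩ := Nat.exists_eq_add_of_le hp.two_le
    rw [pow_add, hM, (Nat.cast_commute _ Y).eq, mul_assoc, hpM k (by omega), mul_zero]
  have hterm : ∀ m ∈ Finset.range (p + 1), m ∉ Finset.range 2 →
      M ^ m * 1 ^ (p - m) * (p.choose m : A) = 0 := by
    intro m hm hm2
    simp only [Finset.mem_range] at hm hm2
    rcases (show m < p ∨ m = p by omega) with hmp | rfl
    · obtain ⟨c, hc⟩ := hp.dvd_choose_self (by omega) hmp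
      rw [one_pow, mul_one, hc, Nat.cast_mul, ← mul_assoc, ← (Nat.cast_commute p _).eq,
        hpM m (by omega), zero_mul]
    · simp [hMp]
  rw [add_comm, (Commute.one_right M).add_pow,
    ← Finset.sum_subset (Finset.range_subset_range.2 (by omega)) hterm]
  simp [Finset.sum_range_succ, add_comm, (Nat.cast_commute p M).eq]

theorem one_add_add_nsmul_pow_prime (hp : p.Prime) (hp3 : 3 < p) (hpp : (p : A) ^ 2 = 0)
    {N X : A} (hN : N * N = 0) : (1 + (N + p • X)) ^ p = 1 + p • N := by
  have hsq : (N + p • X) ^ 2 = p • (N * X + X * N) := by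
    have hpX : (p • X) * (p • X) = 0 := by
      rw [smul_mul_smul, nsmul_eq_mul, Nat.cast_mul, ← sq, hpp, zero_mul]
    rw [sq, add_mul, mul_add, mul_add, hN, hpX, smul_add, mul_smul_comm, smul_mul_assoc]
    abel
  rw [one_add_pow_prime_of_sq_eq hp hp3 hpp hsq, smul_add, smul_smul, nsmul_eq_mul (p * p),
    Nat.cast_mul, ← sq, hpp, zero_mul, add_zero]

end

section

variable {p : ℕ}

local notation "M₂" => Matrix (Fin 2) (Fin 2) (ZMod (p ^ 2))

theorem natCast_mul_self_eq_zero : (p : ZMod (p ^ 2)) * p = 0 := by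
  rw [← Nat.cast_mul, ← sq, ZMod.natCast_self]

theorem exists_eq_add_mul_of_red_eq {x y : ZMod (p ^ 2)} (h : red p x = red p y) :
    ∃ z, x = y + p * z := by
  obtain ⟨n, hn⟩ := ZMod.intCast_surjective (x - y)
  have hn0 : (n : ZMod p) = 0 := by rw [← map_intCast (red p), hn, map_sub, h, sub_self]
  obtain ⟨k, rfl⟩ := (ZMod.intCast_zmod_eq_zero_iff_dvd n p).1 hn0
  exact ⟨k, by push_cast at hn; linear_combination -hn⟩

theorem exists_eq_add_smul_of_map_red_eq {m n : Type*} {M N : Matrix m n (ZMod (p ^ 2))}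
    (h : M.map (red p) = N.map (red p)) : ∃ X, M = N + (p : ZMod (p ^ 2)) • X := by
  choose X hX using fun i j => exists_eq_add_mul_of_red_eq (congr_fun₂ h i j)
  exact ⟨Matrix.of X, by ext i j; simp [hX]⟩

theorem phi_val (g : GL2 (p ^ 2)) :
    (phi p g : Matrix (Fin 2) (Fin 2) (ZMod p)) = (g : M₂).map (red p) :=
  rfl

theorem det_phi (g : GL2 (p ^ 2)) :
    (phi p g : Matrix (Fin 2) (Fin 2) (ZMod p)).det = red p (g : M₂).det :=
  ((red p).map_det _).symm

theorem kerUnit_val (A : M₂) : (kerUnit A : M₂) = 1 + (p : ZMod (p ^ 2)) • A :=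
  rfl

theorem kerUnit_mul (A B : M₂) : kerUnit A * kerUnit B = kerUnit (A + B) := by
  ext : 1
  simp only [Units.val_mul, kerUnit_val, add_mul, mul_add, one_mul, mul_one, smul_mul_smul,
    natCast_mul_self_eq_zero, zero_smul, smul_add]
  abel

theorem kerUnit_eq_one {A : M₂} (h : (p : ZMod (p ^ 2)) • A = 0) : kerUnit A = 1 := by
  ext : 1
  simp [kerUnit_val, h]

theorem kerUnit_conj (g : GL2 (p ^ 2)) (A : M₂) :
    g * kerUnit A * g⁻¹ = kerUnit ((g : M₂) * A * ((g⁻¹ : GL2 (p ^ 2)) : M₂)) := by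
  ext : 1
  simp [kerUnit_val, mul_add, add_mul]

theorem det_kerUnit (A : M₂) : (kerUnit A : M₂).det = 1 + trace A * p := by
  rw [kerUnit_val, det_one_add_smul, (sq _).trans natCast_mul_self_eq_zero, mul_zero, add_zero]

theorem phi_kerUnit (A : M₂) : phi p (kerUnit A) = 1 := by
  ext : 1
  rw [phi_val, kerUnit_val, Units.val_one, ← RingHom.mapMatrix_apply, map_add, map_one,
    add_eq_left]
  ext i j
  simp [red]

theorem exists_kerUnit_eq_of_phi_eq_one {g : GL2 (p ^ 2)} (hg : phi p g = 1) :
    ∃ A, kerUnit A = g := by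
  have hmap : (g : M₂).map (red p) = (1 : M₂).map (red p) := by
    rw [← phi_val, hg]
    simp
  obtain ⟨X, hX⟩ := exists_eq_add_smul_of_map_red_eq hmap
  exact ⟨X, Units.ext hX.symm⟩

instance : IsMulCommutative (phi p).ker := by
  refine IsMulCommutative.of_comm fun ⟨x, hx⟩ ⟨y, hy⟩ => Subtype.ext ?_
  obtain ⟨A, rfl⟩ := exists_kerUnit_eq_of_phi_eq_one hx
  obtain ⟨B, rfl⟩ := exists_kerUnit_eq_of_phi_eq_one hy
  simp only [Subgroup.coe_mul, kerUnit_mul, add_comm]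

def kerUnitPreimage (H : Subgroup (GL2 (p ^ 2))) : Submodule (ZMod (p ^ 2)) M₂ :=
  AddSubgroup.toZModSubmodule (p ^ 2)
    { carrier := {A | kerUnit A ∈ H}
      add_mem' := fun {A B} hA hB => by
        simpa only [Set.mem_ofPred_eq, kerUnit_mul] using H.mul_mem hA hB
      zero_mem' := by
        simpa only [Set.mem_ofPred_eq, kerUnit_eq_one (smul_zero _)] using H.one_mem
      neg_mem' := fun {A} hA => by
        have hinv : kerUnit (-A) = (kerUnit A)⁻¹ := eq_inv_of_mul_eq_one_left <| by
          rw [kerUnit_mul, neg_add_cancel, kerUnit_eq_one (smul_zero _)]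
        simpa only [Set.mem_ofPred_eq, hinv] using H.inv_mem hA }

theorem mem_kerUnitPreimage {H : Subgroup (GL2 (p ^ 2))} {A : M₂} :
    A ∈ kerUnitPreimage H ↔ kerUnit A ∈ H :=
  Iff.rfl

theorem pow_prime_eq_kerUnit (hp : p.Prime) (hp3 : 3 < p) {h : GL2 (p ^ 2)}
    (hh : (h : M₂).map (red p) = !![1, 1; 0, 1]) : h ^ p = kerUnit !![0, 1; 0, 0] := by
  obtain ⟨X, hX⟩ := exists_eq_add_smul_of_map_red_eq (N := 1 + !![0, 1; 0, 0]) (by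
    rw [hh]
    ext i j
    fin_cases i <;> fin_cases j <;> simp)
  have hpp : (p : M₂) ^ 2 = 0 := by rw [← Nat.cast_pow, CharP.cast_eq_zero]
  have hN : !![0, 1; 0, 0] * !![0, 1; 0, 0] = (0 : M₂) := by
    ext i j
    fin_cases i <;> fin_cases j <;> simp
  ext : 1
  rw [Units.val_pow_eq_pow_val, hX, Nat.cast_smul_eq_nsmul, add_assoc,
    one_add_add_nsmul_pow_prime hp hp3 hpp hN, kerUnit_val, Nat.cast_smul_eq_nsmul]

theorem phi_toGL_mem_map {H : Subgroup (GL2 (p ^ 2))}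
    (hSL : ∀ M : GL2 p,
      (↑M : Matrix (Fin 2) (Fin 2) (ZMod p)).det = 1 → M ∈ H.map (phi p))
    (S : SpecialLinearGroup (Fin 2) (ZMod (p ^ 2))) :
    phi p (SpecialLinearGroup.toGL S) ∈ H.map (phi p) :=
  hSL _ (by simp [det_phi])

theorem conj_mem_kerUnitPreimage {H : Subgroup (GL2 (p ^ 2))}
    (hSL : ∀ M : GL2 p,
      (↑M : Matrix (Fin 2) (Fin 2) (ZMod p)).det = 1 → M ∈ H.map (phi p))
    (S : SpecialLinearGroup (Fin 2) (ZMod (p ^ 2))) {A : M₂} (hA : A ∈ kerUnitPreimage H) :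
    (S : M₂) * A * adjugate S ∈ kerUnitPreimage H := by
  have := Subgroup.conj_mem_of_mem_ker hA (phi_kerUnit A) (phi_toGL_mem_map hSL S)
  have hinv : (((SpecialLinearGroup.toGL S)⁻¹ : GL2 (p ^ 2)) : M₂) = adjugate (S : M₂) := rfl
  rwa [kerUnit_conj, hinv] at this

theorem upper_mem_kerUnitPreimage (hp : p.Prime) (hp3 : 3 < p) {H : Subgroup (GL2 (p ^ 2))}
    (hSL : ∀ M : GL2 p,
      (↑M : Matrix (Fin 2) (Fin 2) (ZMod p)).det = 1 → M ∈ H.map (phi p)) :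
    !![0, 1; 0, 0] ∈ kerUnitPreimage H := by
  obtain ⟨h, hH, hh⟩ := phi_toGL_mem_map hSL ⟨!![1, 1; 0, 1], by simp⟩
  rw [mem_kerUnitPreimage, ← pow_prime_eq_kerUnit hp hp3 (h := h)]
  · exact H.pow_mem hH p
  · rw [← phi_val, hh, phi_val]
    change (!![1, 1; 0, 1] : M₂).map (red p) = _
    ext i j
    fin_cases i <;> fin_cases j <;> simp

theorem conj_upper_mem_kerUnitPreimage {H : Subgroup (GL2 (p ^ 2))}
    (hSL : ∀ M : GL2 p,
      (↑M : Matrix (Fin 2) (Fin 2) (ZMod p)).det = 1 → M ∈ H.map (phi p))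
    (hE : !![0, 1; 0, 0] ∈ kerUnitPreimage H) {a b c d : ZMod (p ^ 2)} (h : a * d - b * c = 1) :
    !![-(a * c), a * a; -(c * c), a * c] ∈ kerUnitPreimage H := by
  convert conj_mem_kerUnitPreimage hSL ⟨!![a, b; c, d], by simpa using h⟩ hE using 1
  ext i j
  fin_cases i <;> fin_cases j <;> simp [adjugate_fin_two_of, mul_comm]

theorem mem_kerUnitPreimage_of_trace_mul_eq_zero {H : Subgroup (GL2 (p ^ 2))}
    (hE : !![0, 1; 0, 0] ∈ kerUnitPreimage H) (hF : !![0, 0; -1, 0] ∈ kerUnitPreimage H)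
    (hW : !![-1, 1; -1, 1] ∈ kerUnitPreimage H) {A : M₂} (hA : trace A * p = 0) :
    A ∈ kerUnitPreimage H := by
  have hdiag : trace A • !![0, 0; 0, 1] ∈ kerUnitPreimage H := by
    rw [mem_kerUnitPreimage, kerUnit_eq_one (by rw [smul_smul, mul_comm, hA, zero_smul])]
    exact H.one_mem
  have hdecomp : A = A 0 0 • (!![0, 1; 0, 0] + !![0, 0; -1, 0] - !![-1, 1; -1, 1]) +
      A 0 1 • !![0, 1; 0, 0] - A 1 0 • !![0, 0; -1, 0] + trace A • !![0, 0; 0, 1] := by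
    ext i j
    fin_cases i <;> fin_cases j <;> simp [trace_fin_two]
  rw [hdecomp]
  exact add_mem (sub_mem (add_mem (Submodule.smul_mem _ _ (sub_mem (add_mem hE hF) hW))
    (Submodule.smul_mem _ _ hE)) (Submodule.smul_mem _ _ hF)) hdiag

end

/-- Let `p > 3` be prime and `H ≤ GL₂(ℤ/p²ℤ)`. If `φ(H)` contains
every element of `GL₂(ℤ/pℤ)` of determinant `1`, then `H` contains every
`g ∈ GL₂(ℤ/p²ℤ)` with `φ(g) = 1` and `det g = 1`, i.e. `ker φ ∩ SL₂(ℤ/p²ℤ) ⊆ H`. -/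
theorem T_le_of_SL_le_image {p : ℕ} [Fact p.Prime] (hp3 : 3 < p)
    (H : Subgroup (GL2 (p^2)))
    (hSL : ∀ M : GL2 p,
      (↑M : Matrix (Fin 2) (Fin 2) (ZMod p)).det = 1 → M ∈ H.map (phi p)) :
    ∀ g : GL2 (p^2), phi p g = 1 →
      (↑g : Matrix (Fin 2) (Fin 2) (ZMod (p^2))).det = 1 → g ∈ H := by
  intro g hg hdet
  have hE := upper_mem_kerUnitPreimage Fact.out hp3 hSL
  have hF : !![0, 0; -1, 0] ∈ kerUnitPreimage H := by
    simpa using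
      conj_upper_mem_kerUnitPreimage hSL hE (a := 0) (b := -1) (c := 1) (d := 0) (by ring)
  have hW : !![-1, 1; -1, 1] ∈ kerUnitPreimage H := by
    simpa using
      conj_upper_mem_kerUnitPreimage hSL hE (a := 1) (b := 0) (c := 1) (d := 1) (by ring)
  obtain ⟨A, rfl⟩ := exists_kerUnit_eq_of_phi_eq_one hg
  rw [det_kerUnit, add_eq_left] at hdet
  exact mem_kerUnitPreimage_of_trace_mul_eq_zero hE hF hW hdet
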